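/- For every k ≥ 3, any graph H obtained from G_k by pasting a distinct clique of order at least 3 onto each heavy edge is Hamiltonian but not cycle extendible. -/

import Mathlib

def Gk (k : ℕ) : SimpleGraph (Fin (3 * k + 1)) where
  Adj a b := a ≠ b ∧ (a.val < k ∨ b.val < k ∨ a.val + 1 = b.val ∨ b.val + 1 = a.val)
  symm := ⟨by rintro a b ⟨h1, h2⟩; exact ⟨h1.symm, by tauto⟩⟩
  loopless := ⟨by rintro a ⟨h, _⟩; exact h rfl⟩

def xv (k : ℕ) (i : Fin k) : Fin (3 * k + 1) := ⟨i.val, by have := i.isLt; omega⟩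
def uv (k : ℕ) (i : Fin k) : Fin (3 * k + 1) := ⟨k + i.val, by have := i.isLt; omega⟩
def zv (k : ℕ) : Fin (3 * k + 1) := ⟨2 * k, by omega⟩
def vv (k : ℕ) (i : Fin k) : Fin (3 * k + 1) := ⟨3 * k - i.val, by omega⟩

/-- Index type for the heavy edges of `G_k`: `inl i` is the edge `x_{i+1}u_{i+1}`,
`inr i` is the edge `x_{i+1}v_{i+1}` (`i + 1 ≤ k - 1`). -/
abbrev HeavyIdx (k : ℕ) := Fin k ⊕ Fin (k - 1)

/-- The endpoints of a heavy edge of `G_k`. -/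
def heavyEnds (k : ℕ) : HeavyIdx k → Fin (3 * k + 1) × Fin (3 * k + 1)
  | .inl i => (xv k i, uv k i)
  | .inr i => (xv k (i.castLE (Nat.sub_le k 1)), vv k (i.castLE (Nat.sub_le k 1)))

/-- The graph obtained from `G_k` by pasting a (distinct) clique onto each heavy
edge.  `W` is the set of new vertices; the new vertex `w` belongs to the clique
pasted onto the heavy edge `f w`.  Each new vertex is adjacent to the other new
vertices of its own clique and to the two ends of its heavy edge, and to nothing
else.  When `f` is surjective, every pasted clique has order at least 3. -/
def pastedGk (k : ℕ) {W : Type*} (f : W → HeavyIdx k) :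
    SimpleGraph (Fin (3 * k + 1) ⊕ W) where
  Adj a b :=
    match a, b with
    | .inl a, .inl b => (Gk k).Adj a b
    | .inl a, .inr w => a = (heavyEnds k (f w)).1 ∨ a = (heavyEnds k (f w)).2
    | .inr w, .inl a => a = (heavyEnds k (f w)).1 ∨ a = (heavyEnds k (f w)).2
    | .inr w, .inr w' => w ≠ w' ∧ f w = f w'
  symm := ⟨by
    rintro (a | w) (b | w') h
    · exact (Gk k).adj_symm h
    · exact h
    · exact h
    · exact ⟨h.1.symm, h.2.symm⟩⟩
  loopless := ⟨by
    rintro (a | w) h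
    · exact (Gk k).irrefl h
    · exact h.1 rfl⟩

/-- A graph is cycle extendible if every non-spanning cycle `C` extends to a cycle
`C'` with `V(C) ⊂ V(C')` and `|V(C')| = |V(C)| + 1`. -/
def CycleExtendible {V : Type*} [Fintype V] [DecidableEq V] (G : SimpleGraph V) : Prop :=
  ∀ (a : V) (c : G.Walk a a), c.IsCycle → c.support.toFinset ≠ Finset.univ →
    ∃ (b : V) (c' : G.Walk b b), c'.IsCycle ∧ c.support.toFinset ⊂ c'.support.toFinset ∧
      c'.support.toFinset.card = c.support.toFinset.card + 1

/-!
Number the vertices of `G_k` from `0`, so that `x_i, u_i, v_i` (`0 ≤ i < k`) and `z` are the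
vertices `i, k + i, 3k - i` and `2k`.

`H` is Hamiltonian: from `x_{k-1}` cross its clique to `u_{k-1}`, pass `z, v_{k-1}`, then run
through the columns `v_i, clique, x_i, clique, u_i` for `i = k-2, …, 0`, alternating direction,
and return to `x_{k-1}`. Skipping `z, v_{k-1}` (and entering column `k-2` at `u_{k-2}`) gives a
cycle `C` through all vertices but `z` and `v_{k-1}`.

An extension of `C` misses exactly one of `z`, `v_{k-1}`. A cycle through all new vertices
traverses each pasted clique from one end of its heavy edge to the other, so for `i ≤ k-2` both
cycle edges at `x_i` go into its two cliques. If `v_{k-1}` is missing, `z` can only be joined to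
`u_{k-1}` and `x_{k-1}`, closing a short cycle with their clique. If `z` is missing, `v_{k-1}` is
joined to `v_{k-2}` and `x_{k-1}`; then `x_{k-2}, x_{k-1}, u_{k-2}, u_{k-1}, v_{k-2}, v_{k-1}` with
their three cliques can only be left along the edge `u_{k-2} u_{k-3}`, whereas a cycle crosses
every cut at least twice.
-/

namespace List

variable {α : Type*}

theorem isChain_cons_append_singleton {R : α → α → Prop} {a b : α}
    {l : List α} (hl : l.Pairwise R) (ha : ∀ x ∈ l, R a x) (hb : ∀ x ∈ l, R x b) (hab : R a b) :
    (a :: l ++ [b]).IsChain R := by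
  rw [isChain_append]
  refine ⟨isChain_cons.2 ⟨fun y hy => ha y (mem_of_mem_head? hy), hl.isChain⟩,
    isChain_singleton b, fun x hx y hy => ?_⟩
  obtain rfl : b = y := by simpa using hy
  cases l with
  | nil => simp_all
  | cons c l => exact hb x (mem_of_mem_getLast? (by simpa using hx))

theorem nodup_and_toFinset_eq_of_forall_mem [DecidableEq α] {l : List α}
    {s : Finset α} (hs : ∀ a ∈ s, a ∈ l) (hl : l.length ≤ s.card) :
    l.Nodup ∧ l.toFinset = s := by
  have hsub : s ⊆ l.toFinset := fun a ha => mem_toFinset.2 (hs a ha)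
  have hcard := Finset.card_le_card hsub
  have hle : l.toFinset.card ≤ l.length := toFinset_card_le l
  have hnodup : (l : Multiset α).Nodup :=
    Multiset.toFinset_card_eq_card_iff_nodup.1 (by
      rw [Multiset.coe_card, show (l : Multiset α).toFinset = l.toFinset from rfl]; omega)
  refine ⟨Multiset.coe_nodup.1 hnodup, ?_⟩
  exact (Finset.eq_of_subset_of_card_le hsub (by omega)).symm

end List

namespace SimpleGraph.Walk

variable {V : Type*} {G : SimpleGraph V}

theorem exists_isCycle_support_eq (a : V) (l : List V) (hchain : (a :: l ++ [a]).IsChain G.Adj)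
    (hnodup : (a :: l).Nodup) (hl : 2 ≤ l.length) :
    ∃ c : G.Walk a a, c.IsCycle ∧ c.support = a :: l ++ [a] := by
  obtain ⟨c, hsupp⟩ : ∃ c : G.Walk a a, c.support = a :: l ++ [a] :=
    ⟨(ofSupport (a :: l ++ [a]) (List.cons_ne_nil _ _) hchain).copy (by simp) (by simp),
      (support_copy _ _ _).trans (support_ofSupport _ _)⟩
  have hlen : c.length = l.length + 1 := by
    have := c.length_support
    rw [hsupp, List.length_append, List.length_cons, List.length_singleton] at this
    omega
  have hnil : ¬ c.Nil := by rw [← length_eq_zero_iff]; omega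
  refine ⟨c, isCycle_iff_isPath_tail_and_le_length.2 ⟨?_, by omega⟩, hsupp⟩
  rw [isPath_def, support_tail_of_not_nil _ hnil, hsupp]
  exact (List.perm_append_singleton a l).symm.nodup_iff.1 hnodup

namespace IsCycle

variable {u : V} {c : G.Walk u u}

/-- A cycle meeting both sides of a cut crosses it along at least two edges. -/
theorem exists_toSubgraph_adj_crossing_ne (hc : c.IsCycle) {S : Set V} {x y : V}
    (hx : x ∈ c.support) (hy : y ∈ c.support) (hxS : x ∈ S) (hyS : y ∉ S) (e : Sym2 V) :
    ∃ a b, c.toSubgraph.Adj a b ∧ a ∈ S ∧ b ∉ S ∧ s(a, b) ≠ e := by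
  classical
  let c' := c.rotate x hx
  have hy' : y ∈ c'.support := (c.mem_support_rotate_iff x hx).2 hy
  obtain ⟨d₁, hd₁, hd₁S⟩ := (c'.takeUntil y hy').exists_boundary_dart S hxS hyS
  obtain ⟨d₂, hd₂, hd₂S⟩ := (c'.dropUntil y hy').reverse.exists_boundary_dart S hxS hyS
  have he₁ : d₁.edge ∈ (c'.takeUntil y hy').edges := List.mem_map_of_mem hd₁
  have he₂ : d₂.edge ∈ (c'.dropUntil y hy').edges := by
    rw [← List.mem_reverse, ← edges_reverse]
    exact List.mem_map_of_mem hd₂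
  have hne : d₁.edge ≠ d₂.edge := fun h =>
    (hc.rotate hx).isTrail.disjoint_edges_takeUntil_dropUntil hy' he₁ (h ▸ he₂)
  have hmem : ∀ {e'}, e' ∈ c'.edges → e' ∈ c.edges := fun h => (c.rotate_edges x hx).mem_iff.1 h
  have hadj : ∀ d : G.Dart, d.edge ∈ c'.edges → c.toSubgraph.Adj d.fst d.snd := fun d hd =>
    adj_toSubgraph_iff_mem_edges.2 (hmem hd)
  by_cases h₁ : d₁.edge = e
  · refine ⟨d₂.fst, d₂.snd, hadj d₂ ?_, hd₂S.1, hd₂S.2, fun h => hne (h₁.trans h.symm)⟩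
    exact c'.edges_dropUntil_subset_edges hy' he₂
  · exact ⟨d₁.fst, d₁.snd, hadj d₁ (c'.edges_takeUntil_subset_edges hy' he₁), hd₁S.1, hd₁S.2, h₁⟩

theorem exists_toSubgraph_adj_crossing (hc : c.IsCycle) {S : Set V} {x y : V}
    (hx : x ∈ c.support) (hy : y ∈ c.support) (hxS : x ∈ S) (hyS : y ∉ S) :
    ∃ a b, c.toSubgraph.Adj a b ∧ a ∈ S ∧ b ∉ S :=
  let ⟨a, b, hab, ha, hb, _⟩ := hc.exists_toSubgraph_adj_crossing_ne hx hy hxS hyS s(x, x)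
  ⟨a, b, hab, ha, hb⟩

theorem toSubgraph_adj_of_forall_adj_imp (hc : c.IsCycle) {v p q : V} (hv : v ∈ c.support)
    (h : ∀ t, c.toSubgraph.Adj v t → t = p ∨ t = q) :
    c.toSubgraph.Adj v p ∧ c.toSubgraph.Adj v q := by
  have hN : c.toSubgraph.neighborSet v = {p, q} := by
    refine Set.eq_of_subset_of_ncard_le (fun t ht => h t ht) ?_
    rw [hc.ncard_neighborSet_toSubgraph_eq_two hv]
    exact (Set.ncard_insert_le p {q}).trans (by simp)
  have hp : p ∈ c.toSubgraph.neighborSet v := by simp [hN]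
  have hq : q ∈ c.toSubgraph.neighborSet v := by simp [hN]
  exact ⟨hp, hq⟩

theorem eq_or_eq_of_toSubgraph_adj (hc : c.IsCycle) {v p q t : V} (hp : c.toSubgraph.Adj v p)
    (hq : c.toSubgraph.Adj v q) (hpq : p ≠ q) (ht : c.toSubgraph.Adj v t) : t = p ∨ t = q := by
  obtain ⟨a, b, -, hN⟩ := Set.ncard_eq_two.1
    (hc.ncard_neighborSet_toSubgraph_eq_two (mem_support_of_adj_toSubgraph hp))
  have hp' : p ∈ c.toSubgraph.neighborSet v := hp
  have hq' : q ∈ c.toSubgraph.neighborSet v := hq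
  have ht' : t ∈ c.toSubgraph.neighborSet v := ht
  rw [hN] at hp' hq' ht'
  simp only [Set.mem_insert_iff, Set.mem_singleton_iff] at hp' hq' ht'
  grind

/-- If the only edges leaving `Q` end in `a` or `b`, a cycle through `Q` and `a` enters `Q`
from `a`: otherwise it would have to enter and leave `Q` through `b`, trapping itself in
`Q ∪ {b}`. -/
theorem exists_toSubgraph_adj_mem_of_attached (hc : c.IsCycle) {Q : Set V} {a b q₀ : V}
    (hQ : ∀ q ∈ Q, ∀ t, G.Adj q t → t ∈ Q ∨ t = a ∨ t = b) (ha : a ∈ c.support)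
    (haQ : a ∉ Q) (hab : a ≠ b) (hq₀ : q₀ ∈ Q) (hq₀c : q₀ ∈ c.support) :
    ∃ q ∈ Q, c.toSubgraph.Adj a q := by
  by_contra! hno
  have hleave : ∀ q t, c.toSubgraph.Adj q t → q ∈ Q → t ∉ Q → t = b := fun q t h hq ht =>
    ((hQ q hq t h.adj_sub).resolve_left ht).resolve_left fun hta => hno q hq (hta ▸ h.symm)
  obtain ⟨q₁, t₁, h₁, hq₁, ht₁⟩ := hc.exists_toSubgraph_adj_crossing hq₀c ha hq₀ haQ
  have e₁ := hleave _ _ h₁ hq₁ ht₁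
  rw [e₁] at h₁
  obtain ⟨q₂, t₂, h₂, hq₂, ht₂, hne⟩ :=
    hc.exists_toSubgraph_adj_crossing_ne hq₀c ha hq₀ haQ s(q₁, b)
  have e₂ := hleave _ _ h₂ hq₂ ht₂
  rw [e₂] at h₂ hne
  have hq₁₂ : q₁ ≠ q₂ := by rintro rfl; exact hne rfl
  have hb : ∀ t, c.toSubgraph.Adj b t → t ∈ Q := fun t ht => by
    rcases hc.eq_or_eq_of_toSubgraph_adj h₁.symm h₂.symm hq₁₂ ht with rfl | rfl <;> assumption
  obtain ⟨s, t, hst, hs, ht⟩ := hc.exists_toSubgraph_adj_crossing (S := Q ∪ {b}) hq₀c ha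
    (Or.inl hq₀) (by simp [haQ, hab])
  rcases hs with hs | rfl
  · exact ht (Or.inr (hleave s t hst hs fun h => ht (Or.inl h)))
  · exact ht (Or.inl (hb t hst))

end IsCycle

end SimpleGraph.Walk

namespace PastedGk

open SimpleGraph Finset

variable {k : ℕ} {W : Type*}

/-- The vertex `m` of `G_k`, with `m` read modulo `3k + 1`. -/
def gkVert (k : ℕ) {W : Type*} (m : ℕ) : Fin (3 * k + 1) ⊕ W := .inl (Fin.ofNat _ m)

theorem gkVert_inj {m n : ℕ} (hm : m ≤ 3 * k) (hn : n ≤ 3 * k) :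
    (gkVert k m : Fin (3 * k + 1) ⊕ W) = gkVert k n ↔ m = n := by
  simp [gkVert, Fin.ext_iff, Nat.mod_eq_of_lt, hm, hn]

theorem gkVert_mem_support {G : SimpleGraph (Fin (3 * k + 1) ⊕ W)} {a₀ : Fin (3 * k + 1) ⊕ W}
    {c : G.Walk a₀ a₀} {M : ℕ} (hsupp : ∀ t, t ∈ c.support ↔ t ≠ gkVert k M) (hM : M ≤ 3 * k)
    {n : ℕ} (hn : n ≤ 3 * k) (hnM : n ≠ M) : gkVert k n ∈ c.support :=
  (hsupp _).2 fun h => hnM ((gkVert_inj hn hM).1 h)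

theorem inl_eq_gkVert (a : Fin (3 * k + 1)) : (.inl a : Fin (3 * k + 1) ⊕ W) = gkVert k a := by
  simp [gkVert]

variable (f : W → HeavyIdx k)

theorem gkVert_adj_gkVert {m n : ℕ} (hm : m ≤ 3 * k) (hn : n ≤ 3 * k) :
    (pastedGk k f).Adj (gkVert k m) (gkVert k n) ↔
      m ≠ n ∧ (m < k ∨ n < k ∨ m + 1 = n ∨ n + 1 = m) := by
  show (Gk k).Adj _ _ ↔ _
  simp [Gk, Fin.ext_iff, Nat.mod_eq_of_lt, hm, hn]

theorem heavyEnds_inl (i : Fin k) :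
    heavyEnds k (.inl i) = (Fin.ofNat _ i, Fin.ofNat _ (k + i)) := by
  have := i.isLt
  simp only [heavyEnds, xv, uv, Prod.mk.injEq, Fin.ext_iff, Fin.val_ofNat]
  constructor <;> (rw [Nat.mod_eq_of_lt]; omega)

theorem heavyEnds_inr (j : Fin (k - 1)) :
    heavyEnds k (.inr j) = (Fin.ofNat _ j, Fin.ofNat _ (3 * k - j)) := by
  have := j.isLt
  simp only [heavyEnds, xv, vv, Prod.mk.injEq, Fin.ext_iff, Fin.val_ofNat, Fin.val_castLE]
  constructor <;> (rw [Nat.mod_eq_of_lt]; omega)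

theorem heavyEnds_injective : Function.Injective (heavyEnds k) := by
  rintro (i | i) (j | j) h <;>
    simp only [heavyEnds, xv, uv, vv, Prod.mk.injEq, Fin.ext_iff, Fin.val_castLE] at h
  · exact congrArg _ (Fin.ext h.1)
  · omega
  · omega
  · exact congrArg _ (Fin.ext h.1)

variable [Fintype W]

/-- The new vertices pasted onto the heavy edge with ends `a` (the `x`-end) and `b`. -/
noncomputable def clique (a b : ℕ) : List (Fin (3 * k + 1) ⊕ W) :=
  (univ.filter fun w => heavyEnds k (f w) = (Fin.ofNat _ a, Fin.ofNat _ b)).toList.map .inr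

section

variable {f}

theorem mem_clique {a b : ℕ} {t : Fin (3 * k + 1) ⊕ W} :
    t ∈ clique f a b ↔ ∃ w, t = .inr w ∧ heavyEnds k (f w) = (Fin.ofNat _ a, Fin.ofNat _ b) := by
  simp [clique, eq_comm, and_comm]

theorem gkVert_notMem_clique (m a b : ℕ) : gkVert k m ∉ clique f a b := by
  simp [mem_clique, gkVert]

theorem adj_of_mem_clique {a b : ℕ} {t : Fin (3 * k + 1) ⊕ W} (ht : t ∈ clique f a b) :
    (pastedGk k f).Adj (gkVert k a) t ∧ (pastedGk k f).Adj (gkVert k b) t := by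
  obtain ⟨w, rfl, hw⟩ := mem_clique.1 ht
  exact ⟨Or.inl (by rw [hw]), Or.inr (by rw [hw])⟩

theorem pairwise_adj_clique (a b : ℕ) : (clique f a b).Pairwise (pastedGk k f).Adj := by
  refine ((nodup_toList _).map Sum.inr_injective).imp_of_mem fun {s t} hs ht hst => ?_
  obtain ⟨w, rfl, hw⟩ := mem_clique.1 hs
  obtain ⟨w', rfl, hw'⟩ := mem_clique.1 ht
  exact ⟨fun h => hst (h ▸ rfl), heavyEnds_injective (hw.trans hw'.symm)⟩

theorem mem_clique_or_of_adj {a b : ℕ} {s t : Fin (3 * k + 1) ⊕ W} (hs : s ∈ clique f a b)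
    (h : (pastedGk k f).Adj s t) : t ∈ clique f a b ∨ t = gkVert k a ∨ t = gkVert k b := by
  obtain ⟨w, rfl, hw⟩ := mem_clique.1 hs
  rcases t with x | w'
  · have h' : x = (heavyEnds k (f w)).1 ∨ x = (heavyEnds k (f w)).2 := h
    rw [hw] at h'
    rcases h' with rfl | rfl
    exacts [Or.inr (Or.inl rfl), Or.inr (Or.inr rfl)]
  · exact Or.inl (mem_clique.2 ⟨w', rfl, h.2 ▸ hw⟩)

theorem exists_mem_clique_u (hf : Function.Surjective f) {i : ℕ} (hi : i < k) :
    ∃ t, t ∈ clique f i (k + i) := by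
  obtain ⟨w, hw⟩ := hf (.inl ⟨i, hi⟩)
  exact ⟨.inr w, mem_clique.2 ⟨w, rfl, by rw [hw, heavyEnds_inl]⟩⟩

theorem exists_mem_clique_v (hf : Function.Surjective f) {i : ℕ} (hi : i + 1 < k) :
    ∃ t, t ∈ clique f i (3 * k - i) := by
  obtain ⟨w, hw⟩ := hf (.inr ⟨i, by omega⟩)
  exact ⟨.inr w, mem_clique.2 ⟨w, rfl, by rw [hw, heavyEnds_inr]⟩⟩

theorem exists_clique_of_gkVert_adj {m : ℕ} (hm : m ≤ 3 * k) {w : W}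
    (h : (pastedGk k f).Adj (gkVert k m) (.inr w)) :
    ∃ i, (i < k ∧ (m = i ∨ m = k + i) ∧ .inr w ∈ clique f i (k + i)) ∨
      (i + 1 < k ∧ (m = i ∨ m = 3 * k - i) ∧ .inr w ∈ clique f i (3 * k - i)) := by
  have hval : ∀ n : ℕ, n ≤ 3 * k → Fin.ofNat (3 * k + 1) m = Fin.ofNat _ n → m = n :=
    fun n hn hmn => (gkVert_inj (W := W) hm hn).1 (congrArg Sum.inl hmn)
  have h' : Fin.ofNat _ m = (heavyEnds k (f w)).1 ∨ Fin.ofNat _ m = (heavyEnds k (f w)).2 := h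
  rcases hfw : f w with i | j
  · rw [hfw, heavyEnds_inl] at h'
    refine ⟨i, Or.inl ⟨i.isLt, ?_, mem_clique.2 ⟨w, rfl, by rw [hfw, heavyEnds_inl]⟩⟩⟩
    exact h'.imp (hval _ (by omega)) (hval _ (by omega))
  · rw [hfw, heavyEnds_inr] at h'
    refine ⟨j, Or.inr ⟨by omega, ?_, mem_clique.2 ⟨w, rfl, by rw [hfw, heavyEnds_inr]⟩⟩⟩
    exact h'.imp (hval _ (by omega)) (hval _ (by omega))

end

theorem isChain_clique {a b p q : ℕ} (hpq : p = a ∧ q = b ∨ p = b ∧ q = a)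
    (hadj : (pastedGk k f).Adj (gkVert k p) (gkVert k q)) :
    (gkVert k p :: clique f a b ++ [gkVert k q]).IsChain (pastedGk k f).Adj := by
  refine List.isChain_cons_append_singleton (pairwise_adj_clique a b) (fun t ht => ?_)
    (fun t ht => ?_) hadj
  · rcases hpq with ⟨rfl, -⟩ | ⟨rfl, -⟩
    exacts [(adj_of_mem_clique ht).1, (adj_of_mem_clique ht).2]
  · rcases hpq with ⟨-, rfl⟩ | ⟨-, rfl⟩
    exacts [(adj_of_mem_clique ht).2.symm, (adj_of_mem_clique ht).1.symm]

noncomputable def column (i : ℕ) : List (Fin (3 * k + 1) ⊕ W) :=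
  gkVert k (3 * k - i) :: clique f i (3 * k - i) ++
    gkVert k i :: clique f i (k + i) ++ [gkVert k (k + i)]

/-- Columns `n - 1, …, 0`, the first one entered at `v_{n-1}` if `fromV` and at `u_{n-1}`
otherwise, the direction alternating from column to column. -/
noncomputable def zigzag : Bool → ℕ → List (Fin (3 * k + 1) ⊕ W)
  | _, 0 => []
  | true, n + 1 => column f n ++ zigzag false n
  | false, n + 1 => (column f n).reverse ++ zigzag true n

theorem isChain_column {i : ℕ} (hi : i + 1 < k) : (column f i).IsChain (pastedGk k f).Adj := by
  have hcol : column f i = gkVert k (3 * k - i) :: clique f i (3 * k - i) ++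
      gkVert k i :: (clique f i (k + i) ++ [gkVert k (k + i)]) := by simp [column]
  rw [hcol, List.isChain_split]
  refine ⟨isChain_clique f (Or.inr ⟨rfl, rfl⟩) ?_, isChain_clique f (Or.inl ⟨rfl, rfl⟩) ?_⟩
  all_goals rw [gkVert_adj_gkVert f (by omega) (by omega)]; omega

theorem head?_column (i : ℕ) : (column f i).head? = some (gkVert k (3 * k - i)) := by
  simp [column]

theorem getLast?_column (i : ℕ) : (column f i).getLast? = some (gkVert k (k + i)) := by
  rw [column, List.getLast?_concat]

theorem head?_zigzag (fromV : Bool) (n : ℕ) :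
    (zigzag f fromV (n + 1)).head? =
      some (gkVert k (if fromV then 3 * k - n else k + n)) := by
  cases fromV <;> simp [zigzag, column]

theorem getLast?_zigzag (fromV : Bool) (n : ℕ) :
    (zigzag f fromV (n + 1)).getLast? = some (gkVert k k) ∨
      (zigzag f fromV (n + 1)).getLast? = some (gkVert k (3 * k)) := by
  induction n generalizing fromV with
  | zero => cases fromV <;> simp [zigzag, getLast?_column, head?_column]
  | succ n ih =>
    have hne : ∀ b, zigzag f b (n + 1) ≠ [] := fun b h => by simpa [h] using head?_zigzag f b n
    cases fromV <;>
    · rw [zigzag, List.getLast?_append_of_ne_nil _ (hne _)]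
      exact ih _

theorem isChain_zigzag (fromV : Bool) {n : ℕ} (hn : n < k) :
    (zigzag f fromV n).IsChain (pastedGk k f).Adj := by
  induction n generalizing fromV with
  | zero => exact List.IsChain.nil
  | succ n ih =>
    have hcol := isChain_column f (i := n) (by omega)
    have hlink : ∀ x ∈ (if fromV then column f n else (column f n).reverse).getLast?,
        ∀ y ∈ (zigzag f (!fromV) n).head?, (pastedGk k f).Adj x y := by
      intro x hx y hy
      obtain ⟨n, rfl⟩ : ∃ m, n = m + 1 := Nat.exists_eq_add_one.2 (by
        rcases n with _ | n
        · simp [zigzag] at hy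
        · omega)
      rw [head?_zigzag, Option.mem_some_iff] at hy
      subst hy
      cases fromV <;>
        simp only [Bool.false_eq_true, ↓reduceIte, Bool.not_false, Bool.not_true,
          List.getLast?_reverse, head?_column, getLast?_column, Option.mem_some_iff] at hx ⊢ <;>
        subst hx <;> rw [gkVert_adj_gkVert f (by omega) (by omega)] <;> omega
    cases fromV
    · refine List.isChain_append.2 ⟨?_, ih _ (by omega), hlink⟩
      exact List.isChain_reverse.2 (hcol.imp fun _ _ h => h.symm)
    · exact List.isChain_append.2 ⟨hcol, ih _ (by omega), hlink⟩

theorem mem_zigzag {fromV : Bool} {n : ℕ} {t : Fin (3 * k + 1) ⊕ W} :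
    t ∈ zigzag f fromV n ↔ ∃ i < n, t ∈ column f i := by
  induction n generalizing fromV with
  | zero => simp [zigzag]
  | succ n ih =>
    cases fromV <;> simp [zigzag, ih, le_iff_lt_or_eq, or_and_right, exists_or,
      or_comm]

theorem length_zigzag (fromV : Bool) (n : ℕ) :
    (zigzag f fromV n).length = ∑ i ∈ range n, (column f i).length := by
  induction n generalizing fromV with
  | zero => simp [zigzag]
  | succ n ih => cases fromV <;> simp [zigzag, ih, sum_range_succ, add_comm]

theorem length_clique_of_heavyEnds_eq {e : HeavyIdx k} {a b : ℕ}
    (he : heavyEnds k e = (Fin.ofNat _ a, Fin.ofNat _ b)) :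
    (clique f a b).length = #{w | f w = e} := by
  simp only [clique, List.length_map, length_toList, ← he, heavyEnds_injective.eq_iff]

theorem sum_length_clique (hk : 1 ≤ k) :
    ∑ i ∈ range (k - 1), ((clique f i (3 * k - i)).length + (clique f i (k + i)).length) +
      (clique f (k - 1) (2 * k - 1)).length = Fintype.card W := by
  have hfib : Fintype.card W = ∑ e : HeavyIdx k, #{w | f w = e} :=
    card_eq_sum_card_fiberwise fun w _ => mem_univ (f w)
  have hu : ∀ i : Fin k, #{w | f w = .inl i} = (clique f i (k + i)).length := fun i =>
    (length_clique_of_heavyEnds_eq f (heavyEnds_inl i)).symm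
  have hv : ∀ j : Fin (k - 1), #{w | f w = .inr j} = (clique f j (3 * k - j)).length := fun j =>
    (length_clique_of_heavyEnds_eq f (heavyEnds_inr j)).symm
  obtain ⟨n, rfl⟩ : ∃ n, k = n + 1 := ⟨k - 1, by omega⟩
  rw [hfib, Fintype.sum_sum_type, Fintype.sum_congr _ _ hu, Fintype.sum_congr _ _ hv,
    Fin.sum_univ_eq_sum_range (fun i => (clique f i (n + 1 + i)).length),
    Fin.sum_univ_eq_sum_range (fun i => (clique f i (3 * (n + 1) - i)).length),
    sum_range_succ, Nat.add_sub_cancel, sum_add_distrib, show n + 1 + n = 2 * (n + 1) - 1 by omega]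
  ring

noncomputable def cycleList (long : Bool) : List (Fin (3 * k + 1) ⊕ W) :=
  gkVert k (k - 1) :: clique f (k - 1) (2 * k - 1) ++ gkVert k (2 * k - 1) ::
    ((if long then [gkVert k (2 * k), gkVert k (2 * k + 1)] else []) ++ zigzag f long (k - 1))

theorem isChain_cycleList (hk : 2 ≤ k) (long : Bool) :
    (cycleList f long ++ [gkVert k (k - 1)]).IsChain (pastedGk k f).Adj := by
  obtain ⟨n, hn⟩ : ∃ n, k - 1 = n + 1 := ⟨k - 2, by omega⟩
  have hZ := isChain_zigzag f long (n := k - 1) (by omega)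
  have hZne : zigzag f long (k - 1) ≠ [] := fun h => by
    have := head?_zigzag f long n
    rw [← hn, h] at this
    simp at this
  have hlist : cycleList f long ++ [gkVert k (k - 1)] =
      gkVert k (k - 1) :: clique f (k - 1) (2 * k - 1) ++ gkVert k (2 * k - 1) ::
        ((if long then [gkVert k (2 * k), gkVert k (2 * k + 1)] else []) ++
          (zigzag f long (k - 1) ++ [gkVert k (k - 1)])) := by
    simp [cycleList]
  rw [hlist, List.isChain_split]
  refine ⟨isChain_clique f (Or.inl ⟨rfl, rfl⟩) ?_, ?_⟩
  · rw [gkVert_adj_gkVert f (by omega) (by omega)]; omega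
  rw [← List.cons_append, List.isChain_append, List.isChain_append]
  refine ⟨?_, ⟨hZ, List.isChain_singleton _, fun x hx y hy => ?_⟩, fun x hx y hy => ?_⟩
  · cases long
    · exact List.isChain_singleton _
    · simp only [↓reduceIte, List.isChain_cons_cons, List.isChain_singleton, and_true]
      rw [gkVert_adj_gkVert f (by omega) (by omega), gkVert_adj_gkVert f (by omega) (by omega)]
      omega
  · obtain ⟨rfl⟩ : gkVert k (k - 1) = y := by simpa using hy
    rw [hn] at hx
    rcases getLast?_zigzag f long n with h | h <;> rw [h, Option.mem_some_iff] at hx <;>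
      subst hx <;>
      rw [gkVert_adj_gkVert f (by omega) (by omega)] <;> omega
  · rw [List.head?_append_of_ne_nil _ hZne, hn, head?_zigzag, Option.mem_some_iff] at hy
    subst hy
    cases long <;> simp only [Bool.false_eq_true, ↓reduceIte, List.getLast?_cons_cons,
      List.getLast?_singleton, Option.mem_some_iff] at hx ⊢ <;> subst hx <;>
      rw [gkVert_adj_gkVert f (by omega) (by omega)] <;> omega

theorem length_cycleList (hk : 1 ≤ k) (long : Bool) :
    (cycleList f long).length = 3 * k - 1 + (if long then 2 else 0) + Fintype.card W := by
  have hcol : ∀ i, (column f i).length =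
      3 + ((clique f i (3 * k - i)).length + (clique f i (k + i)).length) := by
    intro i
    simp only [column, List.length_append, List.length_cons, List.length_nil]
    omega
  rw [← sum_length_clique f hk]
  simp only [cycleList, List.length_append, List.length_cons, length_zigzag, hcol,
    sum_add_distrib, sum_const, card_range, smul_eq_mul]
  cases long <;> simp only [Bool.false_eq_true, ↓reduceIte, List.length_nil, List.length_cons] <;>
    omega

theorem mem_cycleList_of_mem_column {long : Bool} {i : ℕ} (hi : i + 1 < k)
    {t : Fin (3 * k + 1) ⊕ W} (ht : t ∈ column f i) : t ∈ cycleList f long := by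
  simp only [cycleList, List.cons_append, List.mem_cons, List.mem_append]
  exact Or.inr (Or.inr (Or.inr (Or.inr (mem_zigzag f |>.2 ⟨i, by omega, ht⟩))))

theorem mem_cycleList (hk : 2 ≤ k) {long : Bool} {t : Fin (3 * k + 1) ⊕ W}
    (ht : long = true ∨ t ≠ gkVert k (2 * k) ∧ t ≠ gkVert k (2 * k + 1)) :
    t ∈ cycleList f long := by
  have hcol : ∀ {i}, i + 1 < k → t ∈ column f i → t ∈ cycleList f long :=
    fun hi ht => mem_cycleList_of_mem_column f hi ht
  rcases t with a | w
  · rw [inl_eq_gkVert] at ht hcol ⊢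
    have ha := a.isLt
    by_cases h1 : (a : ℕ) + 1 < k
    · exact hcol h1 (by simp [column])
    by_cases h2 : (a : ℕ) = k - 1
    · simp [cycleList, h2]
    by_cases h3 : (a : ℕ) + 1 < 2 * k
    · exact hcol (i := a - k) (by omega) (by simp [column, show k + (a - k) = a by omega])
    by_cases h4 : (a : ℕ) = 2 * k - 1
    · simp [cycleList, h4]
    by_cases h5 : (a : ℕ) ≤ 2 * k + 1
    · obtain rfl | ⟨hz, hv⟩ := ht
      · obtain h | h : (a : ℕ) = 2 * k ∨ (a : ℕ) = 2 * k + 1 := by omega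
        all_goals simp [cycleList, h]
      · obtain h | h : (a : ℕ) = 2 * k ∨ (a : ℕ) = 2 * k + 1 := by omega
        exacts [absurd (h ▸ rfl) hz, absurd (h ▸ rfl) hv]
    · exact hcol (i := 3 * k - a) (by omega)
        (by simp [column, show 3 * k - (3 * k - a) = a by omega])
  · rcases hfw : f w with i | j
    · have hw : Sum.inr w ∈ clique f i (k + i) := mem_clique.2 ⟨w, rfl, by rw [hfw, heavyEnds_inl]⟩
      by_cases hi : (i : ℕ) + 1 < k
      · exact hcol hi (by simp [column, hw])
      · rw [show (i : ℕ) = k - 1 by omega, show k + (k - 1) = 2 * k - 1 by omega] at hw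
        simp [cycleList, hw]
    · have hw : Sum.inr w ∈ clique f j (3 * k - j) :=
        mem_clique.2 ⟨w, rfl, by rw [hfw, heavyEnds_inr]⟩
      exact hcol (i := j) (by omega) (by simp [column, hw])

section

variable [DecidableEq W]

theorem nodup_cycleList_and_toFinset_eq (hk : 2 ≤ k) (long : Bool) :
    (cycleList f long).Nodup ∧ (cycleList f long).toFinset =
      if long then univ else univ \ {gkVert k (2 * k), gkVert k (2 * k + 1)} := by
  have hzv : (gkVert k (2 * k) : Fin (3 * k + 1) ⊕ W) ≠ gkVert k (2 * k + 1) := by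
    rw [Ne, gkVert_inj (by omega) (by omega)]; omega
  apply List.nodup_and_toFinset_eq_of_forall_mem
  · intro t ht
    apply mem_cycleList f hk
    cases long <;> simp_all
  · rw [length_cycleList f (by omega)]
    cases long
    · simp only [Bool.false_eq_true, ↓reduceIte, card_univ_sdiff, card_pair hzv, Fintype.card_sum,
        Fintype.card_fin]
      omega
    · simp only [↓reduceIte, card_univ, Fintype.card_sum, Fintype.card_fin]
      omega

theorem exists_isCycle_support_eq_cycleList (hk : 2 ≤ k) (long : Bool) :
    ∃ c : (pastedGk k f).Walk (gkVert k (k - 1)) (gkVert k (k - 1)),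
      c.IsCycle ∧ c.support = cycleList f long ++ [gkVert k (k - 1)] := by
  obtain ⟨l, hl⟩ : ∃ l, cycleList f long = gkVert k (k - 1) :: l := ⟨_, rfl⟩
  have hlen := length_cycleList f (by omega) long
  have hchain := isChain_cycleList f hk long
  have hnodup := (nodup_cycleList_and_toFinset_eq f hk long).1
  rw [hl] at hlen hchain hnodup ⊢
  refine Walk.exists_isCycle_support_eq _ l hchain hnodup ?_
  rw [List.length_cons] at hlen
  split at hlen <;> omega

theorem isHamiltonian_pastedGk (hk : 2 ≤ k) : (pastedGk k f).IsHamiltonian := fun _ => by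
  obtain ⟨c, hc, hsupp⟩ := exists_isCycle_support_eq_cycleList f hk true
  refine ⟨_, c, Walk.isHamiltonianCycle_iff_isCycle_and_length_eq.2 ⟨hc, ?_⟩⟩
  have := c.length_support
  rw [hsupp, List.length_append, length_cycleList f (by omega)] at this
  simp only [↓reduceIte, List.length_singleton] at this
  simp only [Fintype.card_sum, Fintype.card_fin]
  omega

theorem exists_isCycle_toFinset_support_eq (hk : 2 ≤ k) :
    ∃ (a : Fin (3 * k + 1) ⊕ W) (c : (pastedGk k f).Walk a a), c.IsCycle ∧
      c.support.toFinset = univ \ {gkVert k (2 * k), gkVert k (2 * k + 1)} := by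
  obtain ⟨c, hc, hsupp⟩ := exists_isCycle_support_eq_cycleList f hk false
  refine ⟨_, c, hc, ?_⟩
  rw [hsupp, List.toFinset_append, union_eq_left.2 (by simp [cycleList]),
    (nodup_cycleList_and_toFinset_eq f hk false).2]
  rfl

end

section MissingOneVertex

variable {f} {a₀ : Fin (3 * k + 1) ⊕ W} {c : (pastedGk k f).Walk a₀ a₀} {M : ℕ}

theorem exists_toSubgraph_adj_clique (hc : c.IsCycle)
    (hsupp : ∀ t, t ∈ c.support ↔ t ≠ gkVert k M) (hM : M ≤ 3 * k) {a b : ℕ} (ha : a ≤ 3 * k)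
    (hb : b ≤ 3 * k) (hab : a ≠ b) (haM : a ≠ M) (hbM : b ≠ M) (hQ : ∃ t, t ∈ clique f a b) :
    (∃ t ∈ clique f a b, c.toSubgraph.Adj (gkVert k a) t) ∧
      (∃ t ∈ clique f a b, c.toSubgraph.Adj (gkVert k b) t) := by
  have hne : (gkVert k a : Fin (3 * k + 1) ⊕ W) ≠ gkVert k b :=
    fun h => hab ((gkVert_inj ha hb).1 h)
  obtain ⟨q₀, hq₀⟩ := hQ
  have hq₀c : q₀ ∈ c.support := (hsupp _).2 fun h => gkVert_notMem_clique M a b (h ▸ hq₀)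
  have hattach : ∀ q ∈ {t | t ∈ clique f a b}, ∀ t, (pastedGk k f).Adj q t →
      t ∈ {t | t ∈ clique f a b} ∨ t = gkVert k a ∨ t = gkVert k b := fun q hq t h =>
    mem_clique_or_of_adj hq h
  refine ⟨hc.exists_toSubgraph_adj_mem_of_attached hattach (gkVert_mem_support hsupp hM ha haM)
    (gkVert_notMem_clique a a b) hne hq₀ hq₀c, ?_⟩
  refine hc.exists_toSubgraph_adj_mem_of_attached (fun q hq t h => ?_)
    (gkVert_mem_support hsupp hM hb hbM)
    (gkVert_notMem_clique b a b) hne.symm hq₀ hq₀c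
  rcases hattach q hq t h with h | h | h
  exacts [Or.inl h, Or.inr (Or.inr h), Or.inr (Or.inl h)]

/-- For `i ≤ k - 2` the vertex `x_i` lies on two heavy edges, so a cycle through the two
pasted cliques uses both of its cycle edges on them. -/
theorem mem_clique_of_toSubgraph_adj_x (hf : Function.Surjective f) (hc : c.IsCycle)
    (hsupp : ∀ t, t ∈ c.support ↔ t ≠ gkVert k M) (hM : 2 * k ≤ M ∧ M ≤ 2 * k + 1) {i : ℕ}
    (hi : i + 1 < k) {t : Fin (3 * k + 1) ⊕ W} (ht : c.toSubgraph.Adj (gkVert k i) t) :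
    t ∈ clique f i (k + i) ∨ t ∈ clique f i (3 * k - i) := by
  obtain ⟨q₁, hq₁, h₁⟩ := (exists_toSubgraph_adj_clique hc hsupp (by omega) (by omega)
    (by omega) (by omega) (by omega) (by omega) (exists_mem_clique_u hf (i := i) (by omega))).1
  obtain ⟨q₂, hq₂, h₂⟩ := (exists_toSubgraph_adj_clique hc hsupp (by omega) (by omega)
    (by omega) (by omega) (by omega) (by omega) (exists_mem_clique_v hf hi)).1
  have hq₁₂ : q₁ ≠ q₂ := by
    rintro rfl
    obtain ⟨w, rfl, hw⟩ := mem_clique.1 hq₁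
    obtain ⟨w', hw', hw₂⟩ := mem_clique.1 hq₂
    cases Sum.inr_injective hw'
    have := congrArg (fun p => Sum.inl (β := W) p.2) (hw.symm.trans hw₂)
    exact absurd ((gkVert_inj (by omega) (by omega)).1 this) (by omega)
  rcases hc.eq_or_eq_of_toSubgraph_adj h₁ h₂ hq₁₂ ht with rfl | rfl
  exacts [Or.inl hq₁, Or.inr hq₂]

theorem not_toSubgraph_adj_x (hf : Function.Surjective f) (hc : c.IsCycle)
    (hsupp : ∀ t, t ∈ c.support ↔ t ≠ gkVert k M) (hM : 2 * k ≤ M ∧ M ≤ 2 * k + 1) {i : ℕ}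
    (hi : i + 1 < k) (m : ℕ) : ¬ c.toSubgraph.Adj (gkVert k m) (gkVert k i) := fun h =>
  (mem_clique_of_toSubgraph_adj_x hf hc hsupp hM hi h.symm).elim
    (gkVert_notMem_clique _ _ _) (gkVert_notMem_clique _ _ _)

theorem toSubgraph_adj_gkVert_cases (hf : Function.Surjective f) (hc : c.IsCycle)
    (hsupp : ∀ t, t ∈ c.support ↔ t ≠ gkVert k M) (hM : 2 * k ≤ M ∧ M ≤ 2 * k + 1) {m : ℕ}
    (hkm : k ≤ m) (hm : m ≤ 3 * k) {t : Fin (3 * k + 1) ⊕ W}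
    (ht : c.toSubgraph.Adj (gkVert k m) t) :
    t = gkVert k (k - 1) ∨ t = gkVert k (m - 1) ∨ t = gkVert k (m + 1) ∨
      (∃ i, i < k ∧ m = k + i ∧ t ∈ clique f i (k + i)) ∨
      (∃ i, i + 1 < k ∧ m = 3 * k - i ∧ t ∈ clique f i (3 * k - i)) := by
  rcases t with a | w
  · rw [inl_eq_gkVert] at ht ⊢
    have hadj := (gkVert_adj_gkVert f hm (by omega)).1 ht.adj_sub
    by_cases ha : (a : ℕ) + 1 < k
    · exact absurd ht (not_toSubgraph_adj_x hf hc hsupp hM ha m)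
    · have : (a : ℕ) = k - 1 ∨ (a : ℕ) = m - 1 ∨ (a : ℕ) = m + 1 := by omega
      rcases this with h | h | h <;> simp [h]
  · obtain ⟨i, ⟨hi, hmi, hw⟩ | ⟨hi, hmi, hw⟩⟩ := exists_clique_of_gkVert_adj hm ht.adj_sub
    · exact Or.inr (Or.inr (Or.inr (Or.inl ⟨i, hi, by omega, hw⟩)))
    · exact Or.inr (Or.inr (Or.inr (Or.inr ⟨i, hi, by omega, hw⟩)))

theorem toSubgraph_adj_z_of_missing_v (hf : Function.Surjective f) (hc : c.IsCycle)
    (hsupp : ∀ t, t ∈ c.support ↔ t ≠ gkVert k (2 * k + 1)) {t : Fin (3 * k + 1) ⊕ W}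
    (ht : c.toSubgraph.Adj (gkVert k (2 * k)) t) :
    t = gkVert k (k + (k - 1)) ∨ t = gkVert k (k - 1) := by
  rcases toSubgraph_adj_gkVert_cases hf hc hsupp (by omega) (by omega) (by omega) ht with
    h | h | h | ⟨i, hi, hi', -⟩ | ⟨i, hi, hi', -⟩
  · exact Or.inr h
  · exact Or.inl (h.trans (congrArg _ (by omega)))
  · exact absurd h ((hsupp t).1 (Walk.mem_support_of_adj_toSubgraph ht.symm))
  all_goals omega

theorem false_of_missing_v (hk : 2 ≤ k) (hf : Function.Surjective f) (hc : c.IsCycle)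
    (hsupp : ∀ t, t ∈ c.support ↔ t ≠ gkVert k (2 * k + 1)) : False := by
  have hmem : ∀ {n}, n ≤ 3 * k → n ≠ 2 * k + 1 → gkVert k n ∈ c.support :=
    gkVert_mem_support hsupp (by omega)
  have hz : ∀ t, c.toSubgraph.Adj (gkVert k (2 * k)) t →
      t = gkVert k (k + (k - 1)) ∨ t = gkVert k (k - 1) := fun t ht =>
    toSubgraph_adj_z_of_missing_v hf hc hsupp ht
  obtain ⟨hzu, hzx⟩ := hc.toSubgraph_adj_of_forall_adj_imp (hmem (by omega) (by omega)) hz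
  obtain ⟨⟨q, hq, hxq⟩, ⟨q', hq', huq'⟩⟩ := exists_toSubgraph_adj_clique hc hsupp (by omega)
    (a := k - 1) (b := k + (k - 1)) (by omega) (by omega) (by omega) (by omega) (by omega)
    (exists_mem_clique_u hf (by omega))
  have hzq : ∀ {q}, q ∈ clique f (k - 1) (k + (k - 1)) → gkVert k (2 * k) ≠ q :=
    fun hq h => gkVert_notMem_clique _ _ _ (h ▸ hq)
  -- `z`, `x_{k-1}`, `u_{k-1}` and their clique would form the whole cycle.
  let S : Set (Fin (3 * k + 1) ⊕ W) := {t | (∃ n, t = gkVert k n ∧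
    (n = k - 1 ∨ n = k + (k - 1) ∨ n = 2 * k)) ∨ t ∈ clique f (k - 1) (k + (k - 1))}
  have h0 : gkVert k 0 ∉ S := by
    rintro (⟨n, h, hn⟩ | h)
    · have := (gkVert_inj (by omega) (by omega)).1 h
      omega
    · exact gkVert_notMem_clique _ _ _ h
  obtain ⟨s, t, hst, hs, ht⟩ := hc.exists_toSubgraph_adj_crossing (S := S)
    (hmem (n := k - 1) (by omega) (by omega)) (hmem (n := 0) (by omega) (by omega))
    (Or.inl ⟨_, rfl, Or.inl rfl⟩) h0
  apply ht
  rcases hs with ⟨n, rfl, rfl | rfl | rfl⟩ | hs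
  · rcases hc.eq_or_eq_of_toSubgraph_adj hzx.symm hxq (hzq hq) hst with rfl | rfl
    exacts [Or.inl ⟨_, rfl, Or.inr (Or.inr rfl)⟩, Or.inr hq]
  · rcases hc.eq_or_eq_of_toSubgraph_adj hzu.symm huq' (hzq hq') hst with rfl | rfl
    exacts [Or.inl ⟨_, rfl, Or.inr (Or.inr rfl)⟩, Or.inr hq']
  · rcases hz t hst with rfl | rfl
    exacts [Or.inl ⟨_, rfl, Or.inr (Or.inl rfl)⟩, Or.inl ⟨_, rfl, Or.inl rfl⟩]
  · rcases mem_clique_or_of_adj hs hst.adj_sub with h | rfl | rfl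
    exacts [Or.inr h, Or.inl ⟨_, rfl, Or.inl rfl⟩, Or.inl ⟨_, rfl, Or.inr (Or.inl rfl)⟩]

theorem toSubgraph_adj_v_of_missing_z (hk : 1 ≤ k) (hf : Function.Surjective f) (hc : c.IsCycle)
    (hsupp : ∀ t, t ∈ c.support ↔ t ≠ gkVert k (2 * k)) :
    c.toSubgraph.Adj (gkVert k (2 * k + 1)) (gkVert k (2 * k + 2)) ∧
      c.toSubgraph.Adj (gkVert k (2 * k + 1)) (gkVert k (k - 1)) := by
  refine hc.toSubgraph_adj_of_forall_adj_imp (gkVert_mem_support hsupp (by omega) (by omega)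
    (by omega)) fun t ht => ?_
  rcases toSubgraph_adj_gkVert_cases hf hc hsupp (by omega) (by omega) (by omega) ht with
    h | h | h | ⟨i, hi, hi', -⟩ | ⟨i, hi, hi', -⟩
  · exact Or.inr h
  · exact absurd (h.trans (congrArg _ (by omega)))
      ((hsupp t).1 (Walk.mem_support_of_adj_toSubgraph ht.symm))
  · exact Or.inl h
  all_goals omega

/-- The vertices `x_{k-2}, x_{k-1}, u_{k-2}, u_{k-1}, v_{k-1}, v_{k-2}` and their three cliques. -/
def lastColumns (k : ℕ) (f : W → HeavyIdx k) : Set (Fin (3 * k + 1) ⊕ W) :=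
  {t | (∃ n, t = gkVert k n ∧ (n = k - 2 ∨ n = k - 1 ∨ n = 2 * k - 2 ∨ n = 2 * k - 1 ∨
    n = 2 * k + 1 ∨ n = 2 * k + 2)) ∨ t ∈ clique f (k - 1) (k + (k - 1)) ∨
    t ∈ clique f (k - 2) (k + (k - 2)) ∨ t ∈ clique f (k - 2) (3 * k - (k - 2))}

theorem gkVert_mem_lastColumns {n : ℕ} (hn : n = k - 2 ∨ n = k - 1 ∨ n = 2 * k - 2 ∨
    n = 2 * k - 1 ∨ n = 2 * k + 1 ∨ n = 2 * k + 2) : gkVert k n ∈ lastColumns k f :=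
  Or.inl ⟨n, rfl, hn⟩

theorem toSubgraph_adj_leaving_lastColumns (hk : 3 ≤ k) (hf : Function.Surjective f)
    (hc : c.IsCycle) (hsupp : ∀ t, t ∈ c.support ↔ t ≠ gkVert k (2 * k))
    {s t : Fin (3 * k + 1) ⊕ W} (hst : c.toSubgraph.Adj s t) (hs : s ∈ lastColumns k f)
    (ht : t ∉ lastColumns k f) : s(s, t) = s(gkVert k (2 * k - 2), gkVert k (2 * k - 3)) := by
  have hM : 2 * k ≤ 2 * k ∧ 2 * k ≤ 2 * k + 1 := by omega
  have hz : ∀ {s t}, c.toSubgraph.Adj s t → t ≠ gkVert k (2 * k) := fun h =>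
    (hsupp _).1 (Walk.mem_support_of_adj_toSubgraph h.symm)
  obtain ⟨hvv, hvx⟩ := toSubgraph_adj_v_of_missing_z (by omega) hf hc hsupp
  obtain ⟨q₁, hq₁, hxq₁⟩ := (exists_toSubgraph_adj_clique hc hsupp (by omega)
    (a := k - 1) (b := k + (k - 1)) (by omega) (by omega) (by omega) (by omega) (by omega)
    (exists_mem_clique_u hf (by omega))).1
  obtain ⟨q₃, hq₃, hvq₃⟩ := (exists_toSubgraph_adj_clique hc hsupp (by omega)
    (a := k - 2) (b := 3 * k - (k - 2)) (by omega) (by omega) (by omega) (by omega) (by omega)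
    (exists_mem_clique_v hf (by omega))).2
  rw [show 3 * k - (k - 2) = 2 * k + 2 by omega] at hvq₃
  have hne : ∀ {n a b q}, q ∈ clique f a b → gkVert k n ≠ q :=
    fun hq h => gkVert_notMem_clique _ _ _ (h ▸ hq)
  have hS := fun {n} => gkVert_mem_lastColumns (f := f) (n := n)
  by_contra hst'
  apply ht
  rcases hs with ⟨n, rfl, rfl | rfl | rfl | rfl | rfl | rfl⟩ | hs | hs | hs
  · rcases mem_clique_of_toSubgraph_adj_x hf hc hsupp hM (by omega) hst with h | h
    exacts [Or.inr (Or.inr (Or.inl h)), Or.inr (Or.inr (Or.inr h))]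
  · rcases hc.eq_or_eq_of_toSubgraph_adj hvx.symm hxq₁ (hne hq₁) hst with rfl | rfl
    exacts [hS (by omega), Or.inr (Or.inl hq₁)]
  · rcases toSubgraph_adj_gkVert_cases hf hc hsupp hM (by omega) (by omega) hst with
      h | h | h | ⟨i, hi, hi', h⟩ | ⟨i, hi, hi', -⟩
    · exact h ▸ hS (by omega)
    · exact (hst' (by rw [h, show 2 * k - 2 - 1 = 2 * k - 3 by omega])).elim
    · exact h ▸ hS (by omega)
    · obtain rfl : i = k - 2 := by omega
      exact Or.inr (Or.inr (Or.inl h))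
    · omega
  · rcases toSubgraph_adj_gkVert_cases hf hc hsupp hM (by omega) (by omega) hst with
      h | h | h | ⟨i, hi, hi', h⟩ | ⟨i, hi, hi', -⟩
    · exact h ▸ hS (by omega)
    · exact h ▸ hS (by omega)
    · exact absurd (h.trans (congrArg _ (by omega))) (hz hst)
    · obtain rfl : i = k - 1 := by omega
      exact Or.inr (Or.inl h)
    · omega
  · rcases hc.eq_or_eq_of_toSubgraph_adj hvv hvx (by
      rw [Ne, gkVert_inj (by omega) (by omega)]; omega) hst with rfl | rfl
    exacts [hS (by omega), hS (by omega)]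
  · rcases hc.eq_or_eq_of_toSubgraph_adj hvv.symm hvq₃ (hne hq₃) hst with rfl | rfl
    exacts [hS (by omega), Or.inr (Or.inr (Or.inr hq₃))]
  · rcases mem_clique_or_of_adj hs hst.adj_sub with h | rfl | rfl
    exacts [Or.inr (Or.inl h), hS (by omega), hS (by omega)]
  · rcases mem_clique_or_of_adj hs hst.adj_sub with h | rfl | rfl
    exacts [Or.inr (Or.inr (Or.inl h)), hS (by omega), hS (by omega)]
  · rcases mem_clique_or_of_adj hs hst.adj_sub with h | rfl | rfl
    exacts [Or.inr (Or.inr (Or.inr h)), hS (by omega), hS (by omega)]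

/-- A cycle leaves `lastColumns` along at least two edges, but only `u_{k-2} u_{k-3}` is
available. -/
theorem false_of_missing_z (hk : 3 ≤ k) (hf : Function.Surjective f) (hc : c.IsCycle)
    (hsupp : ∀ t, t ∈ c.support ↔ t ≠ gkVert k (2 * k)) : False := by
  have h0 : gkVert k 0 ∉ lastColumns k f := by
    rintro (⟨n, h, hn⟩ | h | h | h)
    · have := (gkVert_inj (by omega) (by omega)).1 h
      omega
    all_goals exact gkVert_notMem_clique _ _ _ h
  obtain ⟨s, t, hst, hs, ht, hne⟩ := hc.exists_toSubgraph_adj_crossing_ne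
    (gkVert_mem_support hsupp (n := k - 1) (by omega) (by omega) (by omega))
    (gkVert_mem_support hsupp (n := 0) (by omega) (by omega) (by omega))
    (gkVert_mem_lastColumns (by omega)) h0 s(gkVert k (2 * k - 2), gkVert k (2 * k - 3))
  exact hne (toSubgraph_adj_leaving_lastColumns hk hf hc hsupp hst hs ht)

theorem not_cycleExtendible [DecidableEq W] (hk : 3 ≤ k) (hf : Function.Surjective f) :
    ¬ CycleExtendible (pastedGk k f) := by
  intro hext
  obtain ⟨a, c, hc, hsupp⟩ := exists_isCycle_toFinset_support_eq f (by omega)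
  have hzv : (gkVert k (2 * k) : Fin (3 * k + 1) ⊕ W) ≠ gkVert k (2 * k + 1) := by
    rw [Ne, gkVert_inj (by omega) (by omega)]; omega
  obtain ⟨b, c', hc', hsub, hcard⟩ := hext a c hc (by simp [hsupp])
  obtain ⟨y, hy, hins⟩ := exists_eq_insert_iff.2 ⟨hsub.subset, hcard.symm⟩
  rw [hsupp] at hy hins
  have hmem : ∀ t, t ∈ c'.support ↔ t = y ∨ t ≠ gkVert k (2 * k) ∧ t ≠ gkVert k (2 * k + 1) := by
    intro t
    rw [← List.mem_toFinset, ← hins]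
    simp
  simp only [mem_sdiff, mem_univ, mem_insert, mem_singleton, true_and, not_not] at hy
  rcases hy with rfl | rfl
  · exact false_of_missing_v (by omega) hf hc' fun t => by grind
  · exact false_of_missing_z hk hf hc' fun t => by grind

end MissingOneVertex

end PastedGk

/-- stmt5 -/
theorem stmt5 (k : ℕ) (hk : 3 ≤ k) {W : Type*} [Fintype W] [DecidableEq W]
    (f : W → HeavyIdx k) (hf : Function.Surjective f) :
    (pastedGk k f).IsHamiltonian ∧ ¬ CycleExtendible (pastedGk k f) :=
  ⟨PastedGk.isHamiltonian_pastedGk f (by omega), PastedGk.not_cycleExtendible hk hf⟩
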